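/- arXiv:1911.07087 — 4 statements merged into one kernel-verified Lean document; each statement's English description precedes it below -/
import Mathlib

section
/- Suppose the n × (m+1) matrix A = (a_{ij}) has rank m+1, so that ℓ is strictly concave and has a unique maximizer p̃ on {p ∈ 𝕊_m : a_iᵀp > 0 for all i}. Define the iteration p_j^{[s+1]} = p_j^{[s]} · Ψ_j(p^{[s]}) for j = 0,…,m and s = 0,1,2,…. If the starting point p^{[0]} lies in the interior of 𝕊_m (all coordinates strictly positive), then every iterate p^{[s]} lies in 𝕊_m and the sequence p^{[s]} converges to p̃ as s → ∞. -/
/-!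
Write `c = A pt` and `N` for the number of rows. Along the segment from `pt` towards a vertex
`e_j` with `pt_j > 0`, which can be followed in both directions, the derivative of `ℓ` is
`N (Ψ_j(pt) - 1)`, so `Ψ_j(pt) = 1` on the support of `pt`. Then the weights `A i j / (N c_i)`
sum to one over `i`, and Jensen's inequality for `log` gives
`ℓ(pt) - ℓ(p) ≤ N (KL(pt ‖ p) - KL(pt ‖ p Ψ(p)))`. Hence `N KL(pt ‖ p^[s])` is a Lyapunov
function whose decrements dominate the likelihood gaps, which are therefore summable, and
`ℓ(p^[s]) → ℓ(pt)`. A cluster point `q` of the iterates in the compact simplex satisfies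
`A q > 0` and `ℓ(q) = ℓ(pt)`, so it is a second maximizer; `ℓ` is strictly concave because `A`
is injective, so `q = pt`.
-/

open Finset Filter Matrix Real Topology

variable {ι κ : Type*} [Fintype κ]

lemma sub_le_mul_log_div {x y : ℝ} (hx : 0 ≤ x) (hy : 0 < y) : x - y ≤ x * log (x / y) := by
  have := mul_nonneg hy.le (InformationTheory.klFun_nonneg (div_nonneg hx hy.le))
  rw [InformationTheory.klFun_apply] at this
  field_simp at this
  linarith

lemma tendsto_zero_of_le_sub_succ {f g : ℕ → ℝ} (hf : ∀ s, 0 ≤ f s) (hg : ∀ s, 0 ≤ g s)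
    (hfg : ∀ s, f s ≤ g s - g (s + 1)) : Tendsto f atTop (𝓝 0) := by
  refine (summable_of_sum_range_le (c := g 0) hf fun S => ?_).tendsto_atTop_zero
  calc ∑ s ∈ range S, f s ≤ ∑ s ∈ range S, (g s - g (s + 1)) := sum_le_sum fun s _ => hfg s
    _ = g 0 - g S := sum_range_sub' g S
    _ ≤ g 0 := sub_le_self _ (hg S)

noncomputable def relEntropy (q p : κ → ℝ) : ℝ := ∑ j, q j * log (q j / p j)

lemma relEntropy_nonneg {q p : κ → ℝ} (hq : ∀ j, 0 ≤ q j) (hp : ∀ j, 0 < p j)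
    (hsum : ∑ j, p j ≤ ∑ j, q j) : 0 ≤ relEntropy q p :=
  calc 0 ≤ ∑ j, (q j - p j) := by rw [sum_sub_distrib]; linarith
    _ ≤ relEntropy q p := sum_le_sum fun j _ => sub_le_mul_log_div (hq j) (hp j)

lemma relEntropy_sub_relEntropy_mul (q : κ → ℝ) {p r : κ → ℝ} (hp : ∀ j, p j ≠ 0)
    (hr : ∀ j, r j ≠ 0) : relEntropy q p - relEntropy q (p * r) = ∑ j, q j * log (r j) := by
  rw [relEntropy, relEntropy, ← sum_sub_distrib]
  refine sum_congr rfl fun j _ => ?_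
  rcases eq_or_ne (q j) 0 with hq | hq
  · simp [hq]
  · rw [Pi.mul_apply, ← div_div, log_div (div_ne_zero hq (hp j)) (hr j)]
    ring

section Matrix

variable {A : Matrix ι κ ℝ}

lemma mulVec_injective_of_rank_eq_card (h : A.rank = Fintype.card κ) :
    Function.Injective A.mulVec := by
  have hker := LinearMap.finrank_range_add_finrank_ker A.mulVecLin
  rw [Module.finrank_fintype_fun_eq_card, ← Matrix.rank, h, add_eq_left,
    Submodule.finrank_eq_zero] at hker
  exact LinearMap.ker_eq_bot.mp hker

lemma exists_ne_zero_of_mulVec_injective (hA : Function.Injective A.mulVec) (j : κ) :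
    ∃ i, A i j ≠ 0 := by
  classical
  by_contra! h
  have : A *ᵥ Pi.single j 1 = A *ᵥ 0 := by
    ext i
    simp [h i]
  simpa using congrFun (hA this) j

lemma mulVec_pos_of_pos (hA : ∀ i j, 0 ≤ A i j) {p : κ → ℝ} (hp : ∀ j, 0 < p j) {i : ι}
    (hi : A i ≠ 0) : 0 < (A *ᵥ p) i := by
  obtain ⟨j, hj⟩ := Function.ne_iff.mp hi
  exact sum_pos' (fun k _ => mul_nonneg (hA i k) (hp k).le)
    ⟨j, mem_univ j, mul_pos ((hA i j).lt_of_ne' hj) (hp j)⟩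

lemma convex_setOf_mulVec_pos : Convex ℝ {p : κ → ℝ | ∀ i, 0 < (A *ᵥ p) i} := by
  intro p hp q hq a b ha hb hab i
  simp only [mulVec_add, mulVec_smul, Pi.add_apply, Pi.smul_apply, smul_eq_mul]
  rcases ha.eq_or_lt with rfl | ha
  · simp [(zero_add b).symm.trans hab, hq i]
  · exact add_pos_of_pos_of_nonneg (mul_pos ha (hp i)) (mul_nonneg hb (hq i).le)

end Matrix

variable [Fintype ι] (A : Matrix ι κ ℝ)

noncomputable def mixtureLogLik (p : κ → ℝ) : ℝ := ∑ i, log ((A *ᵥ p) i)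

noncomputable def mixturePsi (p : κ → ℝ) (j : κ) : ℝ :=
  (1 / (Fintype.card ι : ℝ)) * ∑ i, A i j / (A *ᵥ p) i

def mixtureDomain : Set (κ → ℝ) := stdSimplex ℝ κ ∩ {p | ∀ i, 0 < (A *ᵥ p) i}

variable {A}

lemma mixturePsi_pos (hA : ∀ i j, 0 ≤ A i j) {p : κ → ℝ} (hp : ∀ i, 0 < (A *ᵥ p) i) {j : κ}
    (hj : ∃ i, A i j ≠ 0) : 0 < mixturePsi A p j := by
  obtain ⟨i, hi⟩ := hj
  have : Nonempty ι := ⟨i⟩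
  exact mul_pos (by positivity) (sum_pos' (fun k _ => div_nonneg (hA k j) (hp k).le)
    ⟨i, mem_univ i, div_pos ((hA i j).lt_of_ne' hi) (hp i)⟩)

lemma sum_mul_mixturePsi [Nonempty ι] {p : κ → ℝ} (hp : ∀ i, (A *ᵥ p) i ≠ 0) :
    ∑ j, p j * mixturePsi A p j = 1 := by
  have hN : (Fintype.card ι : ℝ) ≠ 0 := by positivity
  calc ∑ j, p j * mixturePsi A p j
      = 1 / (Fintype.card ι : ℝ) * ∑ i, (A *ᵥ p) i / (A *ᵥ p) i := by
        simp only [mixturePsi, mul_sum, mulVec, dotProduct, sum_div]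
        rw [sum_comm]
        exact sum_congr rfl fun i _ => sum_congr rfl fun j _ => by ring
    _ = 1 := by simp [div_self (hp _), hN]

lemma em_iterate_pos_and_sum_eq_one [Nonempty ι] (hA : ∀ i j, 0 ≤ A i j)
    (hrow : ∀ i, A i ≠ 0) (hcol : ∀ j, ∃ i, A i j ≠ 0) {seq : ℕ → κ → ℝ}
    (h0 : ∀ j, 0 < seq 0 j) (h0sum : ∑ j, seq 0 j = 1)
    (hseq : ∀ s, seq (s + 1) = seq s * mixturePsi A (seq s)) :
    ∀ s, (∀ j, 0 < seq s j) ∧ ∑ j, seq s j = 1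
  | 0 => ⟨h0, h0sum⟩
  | s + 1 => by
    have hpos := (em_iterate_pos_and_sum_eq_one hA hrow hcol h0 h0sum hseq s).1
    have hApos : ∀ i, 0 < (A *ᵥ seq s) i := fun i => mulVec_pos_of_pos hA hpos (hrow i)
    rw [hseq]
    exact ⟨fun j => mul_pos (hpos j) (mixturePsi_pos hA hApos (hcol j)),
      sum_mul_mixturePsi fun i => (hApos i).ne'⟩

lemma mixturePsi_eq_one_of_isMaxOn [Nonempty ι] {pt : κ → ℝ}
    (hmax : IsMaxOn (mixtureLogLik A) (mixtureDomain A) pt) (hpt : pt ∈ mixtureDomain A)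
    {j : κ} (hj : 0 < pt j) : mixturePsi A pt j = 1 := by
  classical
  obtain ⟨⟨hpt0, hpt1⟩, hc⟩ := hpt
  set v : κ → ℝ := Pi.single j 1 - pt
  set g : ℝ → ℝ := fun t => mixtureLogLik A (pt + t • v)
  have hline : ∀ (t : ℝ) i, (A *ᵥ (pt + t • v)) i = (A *ᵥ pt) i + t * (A *ᵥ v) i := by
    simp [mulVec_add, mulVec_smul]
  have hAv : ∀ i, (A *ᵥ v) i = A i j - (A *ᵥ pt) i := by
    simp [v, mulVec_sub]
  have hderiv : HasDerivAt g (∑ i, (A *ᵥ v) i / (A *ᵥ pt) i) 0 := by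
    simp only [g, mixtureLogLik, hline]
    refine HasDerivAt.fun_sum fun i _ => ?_
    simpa using (((hasDerivAt_id (0 : ℝ)).mul_const ((A *ᵥ v) i)).const_add
      ((A *ᵥ pt) i)).log (by simpa using (hc i).ne')
  have hfeas : ∀ᶠ t in 𝓝 (0 : ℝ), pt + t • v ∈ mixtureDomain A := by
    have hpos : ∀ i, ∀ᶠ t in 𝓝 (0 : ℝ), 0 < (A *ᵥ (pt + t • v)) i := fun i => by
      have : Tendsto (fun t : ℝ => (A *ᵥ pt) i + t * (A *ᵥ v) i) (𝓝 0) (𝓝 ((A *ᵥ pt) i)) :=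
        (by fun_prop : Continuous fun t : ℝ => (A *ᵥ pt) i + t * (A *ᵥ v) i).tendsto' 0 _
          (by simp)
      simpa only [hline] using this.eventually (lt_mem_nhds (hc i))
    filter_upwards [Ioo_mem_nhds (neg_lt_zero.mpr hj) one_pos, eventually_all.mpr hpos]
      with t ht hAt
    have hle1 : pt j ≤ 1 := (mem_Icc_of_mem_stdSimplex ⟨hpt0, hpt1⟩ j).2
    refine ⟨⟨fun l => ?_, ?_⟩, hAt⟩
    · rcases eq_or_ne l j with rfl | hl
      · simp only [v, Pi.add_apply, Pi.smul_apply, Pi.sub_apply, Pi.single_eq_same, smul_eq_mul]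
        nlinarith [ht.1, ht.2]
      · simp only [v, Pi.add_apply, Pi.smul_apply, Pi.sub_apply, Pi.single_eq_of_ne hl,
          smul_eq_mul]
        nlinarith [ht.2, hpt0 l]
    · simp [v, sum_add_distrib, ← mul_sum, hpt1]
  have hloc : IsLocalMax g 0 := by
    filter_upwards [hfeas] with t ht
    simpa [g] using hmax ht
  have hzero := hloc.hasDerivAt_eq_zero hderiv
  simp only [hAv, sub_div, sum_sub_distrib, fun i => div_self (hc i).ne', sum_const, card_univ,
    nsmul_eq_mul, mul_one, sub_eq_zero] at hzero
  rw [mixturePsi, hzero, one_div_mul_cancel (by positivity)]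

lemma mixtureLogLik_sub_le_sum_mul_log_mixturePsi [Nonempty ι] (hA : ∀ i j, 0 ≤ A i j)
    {pt p : κ → ℝ} (hpt0 : ∀ j, 0 ≤ pt j) (hc : ∀ i, 0 < (A *ᵥ pt) i)
    (hfix : ∀ j, 0 < pt j → mixturePsi A pt j = 1) (he : ∀ i, 0 < (A *ᵥ p) i) :
    1 / (Fintype.card ι : ℝ) * (mixtureLogLik A pt - mixtureLogLik A p)
      ≤ ∑ j, pt j * log (mixturePsi A p j) := by
  have hN : 0 < (Fintype.card ι : ℝ) := by positivity
  set w : ι → κ → ℝ := fun i j => A i j / (Fintype.card ι * (A *ᵥ pt) i)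
  have hjensen : ∀ j, 0 < pt j →
      ∑ i, w i j * log ((A *ᵥ pt) i / (A *ᵥ p) i) ≤ log (mixturePsi A p j) := by
    intro j hj
    have hw : ∑ i, w i j = 1 := by
      rw [← hfix j hj, mixturePsi, mul_sum]
      refine sum_congr rfl fun i _ => ?_
      simp only [w]
      field_simp
    have hmean : ∑ i, w i j * ((A *ᵥ pt) i / (A *ᵥ p) i) = mixturePsi A p j := by
      rw [mixturePsi, mul_sum]
      refine sum_congr rfl fun i _ => ?_
      simp only [w]
      field_simp [(hc i).ne']
    rw [← hmean]
    exact strictConcaveOn_log_Ioi.concaveOn.le_map_sum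
      (fun i _ => div_nonneg (hA i j) (mul_pos hN (hc i)).le) hw
      (fun i _ => div_pos (hc i) (he i))
  calc 1 / (Fintype.card ι : ℝ) * (mixtureLogLik A pt - mixtureLogLik A p)
      = ∑ j, pt j * ∑ i, w i j * log ((A *ᵥ pt) i / (A *ᵥ p) i) := by
        simp only [mixtureLogLik, ← sum_sub_distrib, mul_sum]
        rw [sum_comm]
        refine sum_congr rfl fun i _ => ?_
        rw [← log_div (hc i).ne' (he i).ne']
        have hci : ∑ x, A i x * pt x = (A *ᵥ pt) i := rfl
        generalize log ((A *ᵥ pt) i / (A *ᵥ p) i) = L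
        rw [sum_congr rfl fun x _ => (by simp only [w]; ring :
          pt x * (w i x * L) = A i x * pt x * (L / (Fintype.card ι * (A *ᵥ pt) i))),
          ← sum_mul, hci]
        field_simp [(hc i).ne']
    _ ≤ ∑ j, pt j * log (mixturePsi A p j) := by
        refine sum_le_sum fun j _ => ?_
        rcases (hpt0 j).eq_or_lt with hj | hj
        · simp [← hj]
        · exact mul_le_mul_of_nonneg_left (hjensen j hj) hj.le

lemma tendsto_mixtureLogLik_em_iterate [Nonempty ι] (hA : ∀ i j, 0 ≤ A i j)
    (hrow : ∀ i, A i ≠ 0) (hcol : ∀ j, ∃ i, A i j ≠ 0) {pt : κ → ℝ}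
    (hmax : IsMaxOn (mixtureLogLik A) (mixtureDomain A) pt) (hpt : pt ∈ mixtureDomain A)
    {seq : ℕ → κ → ℝ} (hiter : ∀ s, (∀ j, 0 < seq s j) ∧ ∑ j, seq s j = 1)
    (hseq : ∀ s, seq (s + 1) = seq s * mixturePsi A (seq s)) :
    Tendsto (fun s => mixtureLogLik A (seq s)) atTop (𝓝 (mixtureLogLik A pt)) := by
  have hN : 0 < (Fintype.card ι : ℝ) := by positivity
  have hApos : ∀ s i, 0 < (A *ᵥ seq s) i := fun s i => mulVec_pos_of_pos hA (hiter s).1 (hrow i)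
  have hgap : Tendsto (fun s => mixtureLogLik A pt - mixtureLogLik A (seq s)) atTop (𝓝 0) := by
    refine tendsto_zero_of_le_sub_succ (g := fun s => Fintype.card ι * relEntropy pt (seq s))
      (fun s => sub_nonneg.mpr (hmax ⟨⟨fun j => ((hiter s).1 j).le, (hiter s).2⟩, hApos s⟩))
      (fun s => mul_nonneg hN.le (relEntropy_nonneg hpt.1.1 (hiter s).1
        ((hiter s).2.trans hpt.1.2.symm).le)) fun s => ?_
    have hdesc := mixtureLogLik_sub_le_sum_mul_log_mixturePsi hA hpt.1.1 hpt.2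
      (fun j => mixturePsi_eq_one_of_isMaxOn hmax hpt) (hApos s)
    rw [one_div_mul_eq_div] at hdesc
    rw [← mul_sub, hseq, relEntropy_sub_relEntropy_mul pt (fun j => ((hiter s).1 j).ne')
      (fun j => (mixturePsi_pos hA (hApos s) (hcol j)).ne')]
    exact (div_le_iff₀' hN).mp hdesc
  simpa using (tendsto_const_nhds (x := mixtureLogLik A pt)).sub hgap

lemma strictConcaveOn_mixtureLogLik (hA : Function.Injective A.mulVec) :
    StrictConcaveOn ℝ {p | ∀ i, 0 < (A *ᵥ p) i} (mixtureLogLik A) := by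
  refine ⟨convex_setOf_mulVec_pos, fun p hp q hq hpq a b ha hb hab => ?_⟩
  obtain ⟨i₀, hi₀⟩ : ∃ i, (A *ᵥ p) i ≠ (A *ᵥ q) i := by
    by_contra! h
    exact hpq (hA (funext h))
  simp only [mixtureLogLik, smul_eq_mul, mul_sum, ← sum_add_distrib, mulVec_add, mulVec_smul,
    Pi.add_apply, Pi.smul_apply]
  refine sum_lt_sum (fun i _ => ?_) ⟨i₀, mem_univ _, ?_⟩
  · exact strictConcaveOn_log_Ioi.concaveOn.2 (hp i) (hq i) ha.le hb.le hab
  · exact strictConcaveOn_log_Ioi.2 (hp i₀) (hq i₀) hi₀ ha hb hab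

/-- A lower bound on `ℓ` keeps every `(A p)_i` away from `0`; this stands in for `ℓ = -∞` on
the boundary of the domain, where Lean's `log 0 = 0` would make `ℓ` finite. -/
lemma exp_sub_le_mulVec [DecidableEq ι] (hA : ∀ i j, 0 ≤ A i j) {p : κ → ℝ}
    (hp : p ∈ mixtureDomain A) (i : ι) :
    exp (mixtureLogLik A p - ∑ k ∈ univ.erase i, log (∑ j, A k j)) ≤ (A *ᵥ p) i := by
  have hrow : ∀ k, log ((A *ᵥ p) k) ≤ log (∑ j, A k j) := fun k =>
    log_le_log (hp.2 k) (sum_le_sum fun j _ =>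
      mul_le_of_le_one_right (hA k j) (mem_Icc_of_mem_stdSimplex hp.1 j).2)
  rw [← exp_log (hp.2 i), exp_le_exp, sub_le_iff_le_add', mixtureLogLik,
    ← add_sum_erase _ _ (mem_univ i)]
  linarith [sum_le_sum (s := univ.erase i) fun k _ => hrow k]

lemma mem_mixtureDomain_of_tendsto (hA : ∀ i j, 0 ≤ A i j) {u : ℕ → κ → ℝ} {q : κ → ℝ}
    {L : ℝ} (hu : ∀ k, u k ∈ mixtureDomain A) (huq : Tendsto u atTop (𝓝 q))
    (hL : Tendsto (fun k => mixtureLogLik A (u k)) atTop (𝓝 L)) :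
    q ∈ mixtureDomain A ∧ mixtureLogLik A q = L := by
  classical
  have hAu : ∀ i, Tendsto (fun k => (A *ᵥ u k) i) atTop (𝓝 ((A *ᵥ q) i)) := fun i =>
    ((continuous_apply i).comp A.mulVecLin.continuous_of_finiteDimensional).tendsto q |>.comp huq
  have hpos : ∀ i, 0 < (A *ᵥ q) i := fun i =>
    (exp_pos _).trans_le <| le_of_tendsto_of_tendsto'
      ((continuous_exp.tendsto _).comp (hL.sub_const _)) (hAu i)
      fun k => exp_sub_le_mulVec hA (hu k) i
  refine ⟨⟨(isClosed_stdSimplex ℝ κ).mem_of_tendsto huq (Eventually.of_forall fun k => (hu k).1),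
    hpos⟩, tendsto_nhds_unique ?_ hL⟩
  exact tendsto_finsetSum _ fun i _ => ((continuousAt_log (hpos i).ne').tendsto).comp (hAu i)

theorem tendsto_em_iterate [Nonempty ι] (hA : ∀ i j, 0 ≤ A i j) (hrow : ∀ i, A i ≠ 0)
    (hinj : Function.Injective A.mulVec) {pt : κ → ℝ}
    (hmax : IsMaxOn (mixtureLogLik A) (mixtureDomain A) pt) (hpt : pt ∈ mixtureDomain A)
    {seq : ℕ → κ → ℝ} (hiter : ∀ s, (∀ j, 0 < seq s j) ∧ ∑ j, seq s j = 1)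
    (hseq : ∀ s, seq (s + 1) = seq s * mixturePsi A (seq s)) :
    Tendsto seq atTop (𝓝 pt) := by
  have hdom : ∀ s, seq s ∈ mixtureDomain A := fun s =>
    ⟨⟨fun j => ((hiter s).1 j).le, (hiter s).2⟩,
      fun i => mulVec_pos_of_pos hA (hiter s).1 (hrow i)⟩
  have hL := tendsto_mixtureLogLik_em_iterate hA hrow (exists_ne_zero_of_mulVec_injective hinj)
    hmax hpt hiter hseq
  refine (isCompact_stdSimplex ℝ κ).tendsto_nhds_of_unique_mapClusterPt
    (Eventually.of_forall fun s => (hdom s).1) fun q _ hq => ?_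
  obtain ⟨φ, hφ, hconv⟩ := hq.tendsto_subseq
  obtain ⟨hqdom, hLq⟩ := mem_mixtureDomain_of_tendsto hA (fun k => hdom (φ k)) hconv
    (hL.comp hφ.tendsto_atTop)
  exact ((strictConcaveOn_mixtureLogLik hinj).subset (fun p hp => hp.2)
    ((convex_stdSimplex ℝ κ).inter convex_setOf_mulVec_pos)).eq_of_isMaxOn
    (fun p hp => (hmax hp).trans hLq.ge) hmax hqdom hpt

/-- If the matrix `A = (a i j)` has full column rank `m + 1` (so the
mixture log-likelihood `ℓ(p) = ∑ i, log (aᵢᵀ p)` is strictly concave with a unique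
maximizer `pt` on the simplex), then the fixed-point iteration
`p_j^{[s+1]} = p_j^{[s]} Ψ_j(p^{[s]})`, started in the interior of the simplex,
stays in the simplex and converges to `pt`. -/
theorem stmt_1 (n m : ℕ) (hn : 1 ≤ n)
    (a : Fin n → Fin (m + 1) → ℝ)
    (ha_nonneg : ∀ i j, 0 ≤ a i j) (ha_ne : ∀ i, a i ≠ 0)
    (hrank : (Matrix.of a).rank = m + 1)
    (pt : Fin (m + 1) → ℝ)
    (hpt_nonneg : ∀ j, 0 ≤ pt j) (hpt_sum : ∑ j, pt j = 1)
    (hpt_pos : ∀ i, 0 < ∑ j, a i j * pt j)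
    (hpt_max : ∀ p : Fin (m + 1) → ℝ, (∀ j, 0 ≤ p j) → (∑ j, p j = 1) →
        (∀ i, 0 < ∑ j, a i j * p j) →
        ∑ i, Real.log (∑ j, a i j * p j) ≤ ∑ i, Real.log (∑ j, a i j * pt j))
    (seq : ℕ → Fin (m + 1) → ℝ)
    (hseq0_pos : ∀ j, 0 < seq 0 j) (hseq0_sum : ∑ j, seq 0 j = 1)
    (hseq : ∀ s j, seq (s + 1) j =
        seq s j * ((1 / (n : ℝ)) * ∑ i, a i j / (∑ k, a i k * seq s k))) :
    (∀ s, (∀ j, 0 ≤ seq s j) ∧ ∑ j, seq s j = 1) ∧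
      Tendsto seq atTop (nhds pt) := by
  have : Nonempty (Fin n) := Fin.pos_iff_nonempty.mp hn
  have hinj : Function.Injective (Matrix.of a).mulVec :=
    mulVec_injective_of_rank_eq_card (by rw [hrank, Fintype.card_fin])
  have hmax : IsMaxOn (mixtureLogLik (Matrix.of a)) (mixtureDomain (Matrix.of a)) pt :=
    fun p hp => hpt_max p hp.1.1 hp.1.2 hp.2
  have hseq' : ∀ s, seq (s + 1) = seq s * mixturePsi (Matrix.of a) (seq s) := fun s =>
    funext fun j => by rw [hseq, Pi.mul_apply, mixturePsi, Fintype.card_fin]; rfl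
  have hiter := em_iterate_pos_and_sum_eq_one ha_nonneg ha_ne
    (exists_ne_zero_of_mulVec_injective hinj) hseq0_pos hseq0_sum hseq'
  exact ⟨fun s => ⟨fun j => ((hiter s).1 j).le, (hiter s).2⟩,
    tendsto_em_iterate ha_nonneg ha_ne hinj hmax ⟨⟨hpt_nonneg, hpt_sum⟩, hpt_pos⟩ hiter hseq'⟩
end

section
/- Let p̃ lie in the interior of 𝕊_m with a_iᵀp̃ > 0 for all i and Ψ_j(p̃) = 1 for all j, and let Q = −(1/n) · diag(p̃) · ∇²ℓ(p̃). Equip the subspace ℤ_m = {z ∈ ℝ^{m+1} : Σ_j z_j = 0} with the inner product ⟨u,v⟩ = Σ_{j=0}^m u_j v_j / p̃_j. Then Q restricted to ℤ_m is self-adjoint and positive semidefinite with respect to ⟨·,·⟩, every eigenvalue of Q associated with an eigenvector in ℤ_m lies in the interval [0,1], and if ∇²ℓ(p̃) is negative definite then the smallest such eigenvalue is strictly positive. -/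
/-!
In the inner product `⟨u, v⟩ = ∑ⱼ uⱼ vⱼ / p̃ⱼ`, the matrix `Q = diag(p̃) (-∇²ℓ(p̃)) / n` has the Gram
form `⟨u, Q v⟩ = (1/n) ∑ᵢ (aᵢᵀu)(aᵢᵀv) / (aᵢᵀp̃)²`, which is symmetric and nonnegative. By
Cauchy–Schwarz with weights `aᵢⱼ p̃ⱼ`, `(aᵢᵀz)² / (aᵢᵀp̃) ≤ ∑ⱼ aᵢⱼ zⱼ² / p̃ⱼ`; summing over `i`, the
fixed-point condition `Ψ(p̃) = 1` turns this into `⟨z, Q z⟩ ≤ ⟨z, z⟩`. For an eigenvector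
`⟨z, Q z⟩ = λ ⟨z, z⟩`, which puts `λ` in `[0, 1]`, and `⟨z, Q z⟩ = zᵀ(-∇²ℓ(p̃))z / n > 0` when
`-∇²ℓ(p̃)` is positive definite.
-/

open Finset Matrix

section

variable {ι κ : Type*} [Fintype ι] [Fintype κ]

theorem sum_mul_mulVec_div_eq_of_apply_eq {p : κ → ℝ} (hp : ∀ j, p j ≠ 0) {c : ℝ}
    {G Q : Matrix κ κ ℝ} (hQ : ∀ j k, Q j k = p j * c * G j k) (u v : κ → ℝ) :
    ∑ j, u j * (Q *ᵥ v) j / p j = c * (u ⬝ᵥ G *ᵥ v) := by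
  simp only [mulVec, dotProduct, hQ, sum_div, mul_sum]
  refine sum_congr rfl fun j _ => sum_congr rfl fun k _ => ?_
  field_simp [hp j]

theorem dotProduct_mulVec_eq_sum_of_apply_eq {a : ι → κ → ℝ} {c : ι → ℝ} {G : Matrix κ κ ℝ}
    (hG : ∀ j k, G j k = ∑ i, a i j * a i k / c i ^ 2) (u v : κ → ℝ) :
    u ⬝ᵥ G *ᵥ v = ∑ i, (a i ⬝ᵥ u) * (a i ⬝ᵥ v) / c i ^ 2 := by
  simp only [mulVec, dotProduct, hG, sum_mul, mul_sum, sum_div]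
  rw [sum_comm]
  refine (sum_congr rfl fun k _ => sum_comm).trans ?_
  rw [sum_comm]
  refine sum_congr rfl fun i _ => sum_congr rfl fun k _ =>
    sum_congr rfl fun j _ => ?_
  ring

theorem sq_dotProduct_div_sq_le {a p : κ → ℝ} (ha : ∀ j, 0 ≤ a j) (hp : ∀ j, 0 < p j)
    (z : κ → ℝ) :
    (a ⬝ᵥ z) ^ 2 / (a ⬝ᵥ p) ^ 2 ≤ (∑ j, a j * z j ^ 2 / p j) / (a ⬝ᵥ p) := by
  have cauchySchwarz : (a ⬝ᵥ z) ^ 2 ≤ (a ⬝ᵥ p) * ∑ j, a j * z j ^ 2 / p j :=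
    sum_sq_le_sum_mul_sum_of_sq_le_mul _ (fun j _ => mul_nonneg (ha j) (hp j).le)
      (fun j _ => div_nonneg (mul_nonneg (ha j) (sq_nonneg _)) (hp j).le)
      fun j _ => le_of_eq (by field_simp [(hp j).ne'])
  calc (a ⬝ᵥ z) ^ 2 / (a ⬝ᵥ p) ^ 2
      ≤ (a ⬝ᵥ p) * (∑ j, a j * z j ^ 2 / p j) / (a ⬝ᵥ p) ^ 2 := by gcongr
    _ = (∑ j, a j * z j ^ 2 / p j) / (a ⬝ᵥ p) := by
      rcases eq_or_ne (a ⬝ᵥ p) 0 with h | h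
      · simp [h]
      · field_simp

theorem mul_sum_sq_dotProduct_div_le {a : ι → κ → ℝ} {p : κ → ℝ} (ha : ∀ i j, 0 ≤ a i j)
    (hp : ∀ j, 0 < p j) {c : ℝ} (hc : 0 ≤ c) (hΨ : ∀ j, c * ∑ i, a i j / (a i ⬝ᵥ p) = 1)
    (z : κ → ℝ) :
    c * ∑ i, (a i ⬝ᵥ z) ^ 2 / (a i ⬝ᵥ p) ^ 2 ≤ ∑ j, z j ^ 2 / p j :=
  calc c * ∑ i, (a i ⬝ᵥ z) ^ 2 / (a i ⬝ᵥ p) ^ 2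
      ≤ c * ∑ i, (∑ j, a i j * z j ^ 2 / p j) / (a i ⬝ᵥ p) :=
        mul_le_mul_of_nonneg_left (sum_le_sum fun i _ => sq_dotProduct_div_sq_le (ha i) hp z) hc
    _ = ∑ j, z j ^ 2 / p j * (c * ∑ i, a i j / (a i ⬝ᵥ p)) := by
        simp only [mul_sum, sum_div]
        rw [sum_comm]
        refine sum_congr rfl fun j _ => sum_congr rfl fun i _ => ?_
        ring
    _ = ∑ j, z j ^ 2 / p j := by simp only [hΨ, mul_one]

theorem sum_sq_div_pos {p : κ → ℝ} (hp : ∀ j, 0 < p j) {z : κ → ℝ} (hz : z ≠ 0) :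
    0 < ∑ j, z j ^ 2 / p j := by
  obtain ⟨j, hj⟩ := Function.ne_iff.mp hz
  exact sum_pos' (fun k _ => div_nonneg (sq_nonneg _) (hp k).le)
    ⟨j, mem_univ j, div_pos (sq_pos_of_ne_zero hj) (hp j)⟩

theorem sum_mul_smul_div (p z : κ → ℝ) (lam : ℝ) :
    ∑ j, z j * (lam • z) j / p j = lam * ∑ j, z j ^ 2 / p j := by
  rw [mul_sum]
  refine sum_congr rfl fun j _ => ?_
  rw [Pi.smul_apply, smul_eq_mul]
  ring

end

theorem stmt_6_general (n m : ℕ) (hn : 1 ≤ n)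
    (a : Fin n → Fin (m + 1) → ℝ)
    (ha_nonneg : ∀ i j, 0 ≤ a i j)
    (pt : Fin (m + 1) → ℝ)
    (hpt_pos : ∀ j, 0 < pt j)
    (hΨ : ∀ j, (1 / (n : ℝ)) * ∑ i, a i j / (∑ k, a i k * pt k) = 1)
    (H Q : Matrix (Fin (m + 1)) (Fin (m + 1)) ℝ)
    (hH : ∀ j k, H j k = -(∑ i, a i j * a i k / (∑ l, a i l * pt l) ^ 2))
    (hQ : ∀ j k, Q j k = (pt j / n) * ∑ i, a i j * a i k / (∑ l, a i l * pt l) ^ 2) :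
    (∀ u v : Fin (m + 1) → ℝ, (∑ j, u j = 0) → (∑ j, v j = 0) →
        ∑ j, (Q.mulVec u) j * v j / pt j = ∑ j, u j * (Q.mulVec v) j / pt j) ∧
    (∀ u : Fin (m + 1) → ℝ, (∑ j, u j = 0) → 0 ≤ ∑ j, u j * (Q.mulVec u) j / pt j) ∧
    (∀ (lam : ℝ) (z : Fin (m + 1) → ℝ), (∑ j, z j = 0) → z ≠ 0 →
        Q.mulVec z = lam • z → 0 ≤ lam ∧ lam ≤ 1) ∧
    ((-H).PosDef → ∀ (lam : ℝ) (z : Fin (m + 1) → ℝ), (∑ j, z j = 0) → z ≠ 0 →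
        Q.mulVec z = lam • z → 0 < lam) := by
  have hc : (0 : ℝ) < 1 / n := by
    have : (1 : ℝ) ≤ n := by exact_mod_cast hn
    positivity
  have hG : ∀ j k, (-H) j k = ∑ i, a i j * a i k / (a i ⬝ᵥ pt) ^ 2 := fun j k => by
    rw [neg_apply, hH, neg_neg]; rfl
  have hQG : ∀ j k, Q j k = pt j * (1 / n) * (-H) j k := fun j k => by
    rw [hQ, neg_apply, hH, neg_neg]; ring
  have hform (u v) : ∑ j, u j * (Q *ᵥ v) j / pt j = 1 / n * (u ⬝ᵥ (-H) *ᵥ v) :=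
    sum_mul_mulVec_div_eq_of_apply_eq (fun j => (hpt_pos j).ne') hQG u v
  have hquad (z) : ∑ j, z j * (Q *ᵥ z) j / pt j
      = 1 / n * ∑ i, (a i ⬝ᵥ z) ^ 2 / (a i ⬝ᵥ pt) ^ 2 := by
    simp only [hform, dotProduct_mulVec_eq_sum_of_apply_eq hG, sq]
  have hnonneg (z) : 0 ≤ ∑ j, z j * (Q *ᵥ z) j / pt j := by
    rw [hquad]; positivity
  refine ⟨fun u v _ _ => ?_, fun u _ => hnonneg u, fun lam z _ hz hev => ?_,
    fun hPD lam z _ hz hev => ?_⟩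
  · simp only [mul_comm ((Q *ᵥ u) _), hform, dotProduct_mulVec_eq_sum_of_apply_eq hG,
      mul_comm (a _ ⬝ᵥ v)]
  · have hN := sum_sq_div_pos hpt_pos hz
    have heig : ∑ j, z j * (Q *ᵥ z) j / pt j = lam * ∑ j, z j ^ 2 / pt j := by
      rw [hev, sum_mul_smul_div]
    have hle := mul_sum_sq_dotProduct_div_le ha_nonneg hpt_pos hc.le hΨ z
    have h0 := hnonneg z
    rw [← hquad, heig] at hle
    rw [heig] at h0
    exact ⟨(mul_nonneg_iff_of_pos_right hN).mp h0, (mul_le_iff_le_one_left hN).mp hle⟩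
  · have hpos : 0 < 1 / n * (z ⬝ᵥ (-H) *ᵥ z) :=
      mul_pos hc (by simpa using hPD.dotProduct_mulVec_pos hz)
    rw [← hform, hev, sum_mul_smul_div] at hpos
    exact pos_of_mul_pos_left hpos (sum_sq_div_pos hpt_pos hz).le

/-- With `pt` interior to the simplex, `Ψ_j(pt) = 1` for all `j`,
and `Q = -(1/n) diag(pt) ∇²ℓ(pt)`, equip `Z_m = {z : ∑ j, z j = 0}` with the
inner product `⟨u, v⟩ = ∑ j, u j * v j / pt j`. Then `Q` is self-adjoint and
positive semidefinite on `Z_m` w.r.t. this inner product, every eigenvalue of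
`Q` with eigenvector in `Z_m` lies in `[0, 1]`, and if `∇²ℓ(pt)` is negative
definite then every such eigenvalue is strictly positive. -/
theorem stmt_6 (n m : ℕ) (hn : 1 ≤ n)
    (a : Fin n → Fin (m + 1) → ℝ)
    (ha_nonneg : ∀ i j, 0 ≤ a i j) (ha_ne : ∀ i, a i ≠ 0)
    (pt : Fin (m + 1) → ℝ)
    (hpt_pos : ∀ j, 0 < pt j) (hpt_sum : ∑ j, pt j = 1)
    (hdot_pos : ∀ i, 0 < ∑ j, a i j * pt j)
    (hΨ : ∀ j, (1 / (n : ℝ)) * ∑ i, a i j / (∑ k, a i k * pt k) = 1)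
    (H Q : Matrix (Fin (m + 1)) (Fin (m + 1)) ℝ)
    (hH : ∀ j k, H j k = -(∑ i, a i j * a i k / (∑ l, a i l * pt l) ^ 2))
    (hQ : ∀ j k, Q j k = (pt j / n) * ∑ i, a i j * a i k / (∑ l, a i l * pt l) ^ 2) :
    (∀ u v : Fin (m + 1) → ℝ, (∑ j, u j = 0) → (∑ j, v j = 0) →
        ∑ j, (Q.mulVec u) j * v j / pt j = ∑ j, u j * (Q.mulVec v) j / pt j) ∧
    (∀ u : Fin (m + 1) → ℝ, (∑ j, u j = 0) → 0 ≤ ∑ j, u j * (Q.mulVec u) j / pt j) ∧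
    (∀ (lam : ℝ) (z : Fin (m + 1) → ℝ), (∑ j, z j = 0) → z ≠ 0 →
        Q.mulVec z = lam • z → 0 ≤ lam ∧ lam ≤ 1) ∧
    ((-H).PosDef → ∀ (lam : ℝ) (z : Fin (m + 1) → ℝ), (∑ j, z j = 0) → z ≠ 0 →
        Q.mulVec z = lam • z → 0 < lam) :=
  stmt_6_general n m hn a ha_nonneg pt hpt_pos hΨ H Q hH hQ
end

section
/- Let b > 0 and let f : [0,b] → ℝ be twice continuously differentiable with f(t) > 0 for all t ∈ [0,b]. Then ∫₀^b [ t·(f'(t))²/f(t) − f'(t) − t·f''(t) ] · t dt = ∫₀^b ( t·f'(t)/f(t) + 1 )² f(t) dt − ( b²·f'(b) + b·f(b) ). -/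
open Set intervalIntegral

/-!
The integrand differs from `(t f'/f + 1)² f` by exactly `(t² f' + t f)'`, a pointwise algebraic
identity valid wherever `f ≠ 0`; integrating that derivative by the fundamental theorem of calculus
produces the boundary term.
-/

lemma mul_sq_div_sub_sub_mul_eq {x y y' y'' : ℝ} (hy : y ≠ 0) :
    (x * y' ^ 2 / y - y' - x * y'') * x =
      (x * y' / y + 1) ^ 2 * y - (3 * x * y' + x ^ 2 * y'' + y) := by
  field_simp
  ring

lemma hasDerivAt_sq_mul_add_mul {f f' : ℝ → ℝ} {d t : ℝ} (hf : HasDerivAt f (f' t) t)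
    (hf' : HasDerivAt f' d t) :
    HasDerivAt (fun s => s ^ 2 * f' s + s * f s) (3 * t * f' t + t ^ 2 * d + f t) t :=
  (((hasDerivAt_pow 2 t).mul hf').add ((hasDerivAt_id' t).mul hf)).congr_deriv (by
    simp only [Nat.cast_ofNat, Nat.add_one_sub_one, pow_one, one_mul]; ring)

theorem integral_mul_sq_div_sub_mul_eq {a b : ℝ} {f f' f'' : ℝ → ℝ}
    (hf' : ∀ t ∈ uIcc a b, HasDerivAt f (f' t) t)
    (hf'' : ∀ t ∈ uIcc a b, HasDerivAt f' (f'' t) t)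
    (hcont : ContinuousOn f'' (uIcc a b))
    (hf0 : ∀ t ∈ uIcc a b, f t ≠ 0) :
    ∫ t in a..b, (t * (f' t) ^ 2 / f t - f' t - t * f'' t) * t =
      (∫ t in a..b, (t * f' t / f t + 1) ^ 2 * f t)
        - ((b ^ 2 * f' b + b * f b) - (a ^ 2 * f' a + a * f a)) := by
  have hfc : ContinuousOn f (uIcc a b) :=
    continuousOn_of_forall_continuousAt fun t ht => (hf' t ht).continuousAt
  have hf'c : ContinuousOn f' (uIcc a b) :=
    continuousOn_of_forall_continuousAt fun t ht => (hf'' t ht).continuousAt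
  have hsq : IntervalIntegrable (fun t => (t * f' t / f t + 1) ^ 2 * f t)
      MeasureTheory.volume a b :=
    (((((continuousOn_id.mul hf'c).div hfc hf0).add continuousOn_const).pow 2).mul
      hfc).intervalIntegrable
  have hderiv : IntervalIntegrable (fun t => 3 * t * f' t + t ^ 2 * f'' t + f t)
      MeasureTheory.volume a b :=
    ((((continuousOn_const.mul continuousOn_id).mul hf'c).add
      ((continuousOn_id.pow 2).mul hcont)).add hfc).intervalIntegrable
  calc _ = ∫ t in a..b,
        ((t * f' t / f t + 1) ^ 2 * f t - (3 * t * f' t + t ^ 2 * f'' t + f t)) :=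
        integral_congr fun t ht => mul_sq_div_sub_sub_mul_eq (hf0 t ht)
    _ = _ := by
      rw [integral_sub hsq hderiv, integral_eq_sub_of_hasDerivAt
        (fun t ht => hasDerivAt_sq_mul_add_mul (hf' t ht) (hf'' t ht)) hderiv]

/-- Integration-by-parts identity for the uncensored-data term
`I₀` in the limiting Hessian: for `f` twice continuously differentiable and
positive on `[0, b]`,
`∫₀^b [t (f'(t))²/f(t) − f'(t) − t f''(t)] t dt
   = ∫₀^b (t f'(t)/f(t) + 1)² f(t) dt − (b² f'(b) + b f(b))`. -/
theorem stmt_9 (b : ℝ) (hb : 0 < b) (f f' f'' : ℝ → ℝ)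
    (hf' : ∀ t ∈ Set.Icc (0 : ℝ) b, HasDerivAt f (f' t) t)
    (hf'' : ∀ t ∈ Set.Icc (0 : ℝ) b, HasDerivAt f' (f'' t) t)
    (hcont : ContinuousOn f'' (Set.Icc (0 : ℝ) b))
    (hpos : ∀ t ∈ Set.Icc (0 : ℝ) b, 0 < f t) :
    ∫ t in (0 : ℝ)..b, (t * (f' t) ^ 2 / f t - f' t - t * f'' t) * t =
      (∫ t in (0 : ℝ)..b, (t * f' t / f t + 1) ^ 2 * f t)
        - (b ^ 2 * f' b + b * f b) := by
  rw [← uIcc_of_le hb.le] at hf' hf'' hcont hpos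
  simpa using integral_mul_sq_div_sub_mul_eq hf' hf'' hcont fun t ht => (hpos t ht).ne'
end

section
/- Let σ > 0 and κ > 0, and let f(t) = (σ/κ)·(t/κ)^{σ−1}·exp(−(t/κ)^σ) be the Weibull density with shape σ and scale κ. Then for every τ ≥ κ (with τ > 0), τ²·f'(τ) + τ·f(τ) ≤ 0. -/
/-!
Logarithmic differentiation gives `t f'(t) = f(t) ((σ - 1) - σ (t/κ)^σ)`, so the boundary term
equals `σ τ f(τ) (1 - (τ/κ)^σ)`. The density is nonnegative and `(τ/κ)^σ ≥ 1` once `τ ≥ κ`.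
-/

open Real

noncomputable def weibullPDF (σ κ t : ℝ) : ℝ :=
  σ / κ * (t / κ) ^ (σ - 1) * exp (-(t / κ) ^ σ)

theorem weibullPDF_nonneg {σ κ t : ℝ} (hσ : 0 ≤ σ) (hκ : 0 ≤ κ) (ht : 0 ≤ t) :
    0 ≤ weibullPDF σ κ t := by
  unfold weibullPDF
  positivity

theorem hasDerivAt_weibullPDF (σ : ℝ) {κ t : ℝ} (hκ : κ ≠ 0) (ht : t ≠ 0) :
    HasDerivAt (weibullPDF σ κ)
      (weibullPDF σ κ t * ((σ - 1) - σ * (t / κ) ^ σ) / t) t := by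
  have hu : t / κ ≠ 0 := div_ne_zero ht hκ
  have hlin : HasDerivAt (fun s : ℝ => s / κ) (1 / κ) t := by
    simpa using (hasDerivAt_id t).div_const κ
  have hpow (p : ℝ) : HasDerivAt (fun s : ℝ => (s / κ) ^ p) (p * (t / κ) ^ p / t) t := by
    refine ((hasDerivAt_rpow_const (p := p) (Or.inl hu)).comp t hlin).congr_deriv ?_
    rw [rpow_sub_one hu]
    field_simp
  refine (((hpow (σ - 1)).const_mul (σ / κ)).mul (hpow σ).neg.exp).congr_deriv ?_
  simp only [weibullPDF, Pi.neg_apply]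
  field_simp
  ring

theorem weibullPDF_boundary_term_eq (σ : ℝ) {κ τ : ℝ} (hκ : κ ≠ 0) (hτ : τ ≠ 0) :
    τ ^ 2 * deriv (weibullPDF σ κ) τ + τ * weibullPDF σ κ τ
      = σ * τ * weibullPDF σ κ τ * (1 - (τ / κ) ^ σ) := by
  rw [(hasDerivAt_weibullPDF σ hκ hτ).deriv]
  field_simp
  ring

theorem weibullPDF_boundary_term_nonpos {σ κ τ : ℝ} (hσ : 0 ≤ σ) (hκ : 0 < κ) (hτκ : κ ≤ τ) :
    τ ^ 2 * deriv (weibullPDF σ κ) τ + τ * weibullPDF σ κ τ ≤ 0 := by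
  have hτ : 0 < τ := hκ.trans_le hτκ
  rw [weibullPDF_boundary_term_eq σ hκ.ne' hτ.ne']
  have hscale : 1 ≤ (τ / κ) ^ σ := one_le_rpow ((one_le_div hκ).mpr hτκ) hσ
  have hf : 0 ≤ weibullPDF σ κ τ := weibullPDF_nonneg hσ hκ.le hτ.le
  exact mul_nonpos_of_nonneg_of_nonpos (by positivity) (by linarith)

theorem stmt_12_general (σ κ : ℝ) (hσ : 0 < σ) (hκ : 0 < κ)
    (f : ℝ → ℝ)
    (hf : ∀ t : ℝ, f t = (σ / κ) * (t / κ) ^ (σ - 1) * Real.exp (-(t / κ) ^ σ))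
    (τ : ℝ) (hτκ : κ ≤ τ) :
    τ ^ 2 * deriv f τ + τ * f τ ≤ 0 := by
  obtain rfl : f = weibullPDF σ κ := funext hf
  exact weibullPDF_boundary_term_nonpos hσ.le hκ hτκ

/-- For the Weibull density
`f(t) = (σ/κ) (t/κ)^{σ−1} exp(−(t/κ)^σ)` with shape `σ > 0` and scale `κ > 0`,
and any `τ ≥ κ` (with `τ > 0`), the boundary term `τ² f'(τ) + τ f(τ)` is
nonpositive. -/
theorem stmt_12 (σ κ : ℝ) (hσ : 0 < σ) (hκ : 0 < κ)
    (f : ℝ → ℝ)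
    (hf : ∀ t : ℝ, f t = (σ / κ) * (t / κ) ^ (σ - 1) * Real.exp (-(t / κ) ^ σ))
    (τ : ℝ) (hτκ : κ ≤ τ) (hτ : 0 < τ) :
    τ ^ 2 * deriv f τ + τ * f τ ≤ 0 :=
  stmt_12_general σ κ hσ hκ f hf τ hτκ
end
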